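/- arXiv:math/0309464 — 3 statements merged into one kernel-verified Lean document; each statement's English description precedes it below -/
import Mathlib

section
/- Let A be a C*-algebra and let f ∈ CB^∞(ℝ², A), i.e. f : ℝ² → A smooth with all partial derivatives bounded. With γ(t) = t e^{−t} for t ≥ 0 and γ(t) = 0 for t < 0, and b := (1+∂_y)²(1+∂_η)² f, one has f(x,ξ) = ∫∫ γ(y) γ(η) b(x−y, ξ−η) dy dη for all (x,ξ) ∈ ℝ². -/
open MeasureTheory Real Set Filter Topology

section stmt9helpers

variable {A : Type*} [NormedAddCommGroup A] [NormedSpace ℝ A]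

/-- Directional derivative of a function on `ℝ × ℝ`. -/
noncomputable def stmt9dd (v : ℝ × ℝ) (g : ℝ × ℝ → A) : ℝ × ℝ → A := fun p => fderiv ℝ g p v

lemma stmt9_contDiff_dd {g : ℝ × ℝ → A} (hg : ContDiff ℝ (⊤ : ℕ∞) g) (v : ℝ × ℝ) :
    ContDiff ℝ (⊤ : ℕ∞) (stmt9dd v g) :=
  (hg.fderiv_right (by simp)).clm_apply contDiff_const

lemma stmt9_norm_itd_dd_le {g : ℝ × ℝ → A} (hg : ContDiff ℝ (⊤ : ℕ∞) g) {v : ℝ × ℝ}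
    (hv : ‖v‖ ≤ 1) (k : ℕ) (p : ℝ × ℝ) :
    ‖iteratedFDeriv ℝ k (stmt9dd v g) p‖ ≤ ‖iteratedFDeriv ℝ (k + 1) g p‖ := by
  have h := norm_iteratedFDeriv_clm_apply_const (f := fderiv ℝ g) (c := v) (x := p) (n := k)
      (hg.fderiv_right (m := ((⊤ : ℕ∞) : WithTop ℕ∞)) (by simp)).contDiffAt (by exact_mod_cast le_top)
  calc ‖iteratedFDeriv ℝ k (stmt9dd v g) p‖
      ≤ ‖v‖ * ‖iteratedFDeriv ℝ k (fderiv ℝ g) p‖ := h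
    _ ≤ 1 * ‖iteratedFDeriv ℝ (k + 1) g p‖ := by
        rw [norm_iteratedFDeriv_fderiv]
        exact mul_le_mul_of_nonneg_right hv (norm_nonneg _)
    _ = _ := one_mul _

/-- Smooth with all derivatives bounded. -/
def stmt9Good (g : ℝ × ℝ → A) : Prop :=
  ContDiff ℝ (⊤ : ℕ∞) g ∧ ∀ k : ℕ, ∃ C : ℝ, ∀ p, ‖iteratedFDeriv ℝ k g p‖ ≤ C

lemma stmt9Good.dd {g : ℝ × ℝ → A} (hg : stmt9Good g) {v : ℝ × ℝ} (hv : ‖v‖ ≤ 1) :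
    stmt9Good (stmt9dd v g) := by
  refine ⟨stmt9_contDiff_dd hg.1 v, fun k => ?_⟩
  obtain ⟨C, hC⟩ := hg.2 (k + 1)
  exact ⟨C, fun p => (stmt9_norm_itd_dd_le hg.1 hv k p).trans (hC p)⟩

lemma stmt9Good.add {g h : ℝ × ℝ → A} (hg : stmt9Good g) (hh : stmt9Good h) :
    stmt9Good (g + h) := by
  refine ⟨hg.1.add hh.1, fun k => ?_⟩
  obtain ⟨C, hC⟩ := hg.2 k
  obtain ⟨D, hD⟩ := hh.2 k
  refine ⟨C + D, fun p => ?_⟩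
  rw [iteratedFDeriv_add_apply (hg.1.of_le (by exact_mod_cast le_top)).contDiffAt (hh.1.of_le (by exact_mod_cast le_top)).contDiffAt]
  exact (norm_add_le _ _).trans (add_le_add (hC p) (hD p))

lemma stmt9Good.bound {g : ℝ × ℝ → A} (hg : stmt9Good g) : ∃ C : ℝ, ∀ p, ‖g p‖ ≤ C := by
  obtain ⟨C, hC⟩ := hg.2 0
  exact ⟨C, fun p => by simpa [norm_iteratedFDeriv_zero] using hC p⟩

lemma stmt9_slice_fst {g : ℝ × ℝ → A} (hg : Differentiable ℝ g) (c z : ℝ) :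
    HasDerivAt (fun s => g (s, c)) (stmt9dd (1, 0) g (z, c)) z := by
  have hl : HasDerivAt (fun s : ℝ => (s, c)) ((1 : ℝ), (0 : ℝ)) z :=
    (hasDerivAt_id z).prodMk (hasDerivAt_const z c)
  exact (hg (z, c)).hasFDerivAt.comp_hasDerivAt z hl

lemma stmt9_slice_snd {g : ℝ × ℝ → A} (hg : Differentiable ℝ g) (c z : ℝ) :
    HasDerivAt (fun s => g (c, s)) (stmt9dd (0, 1) g (c, z)) z := by
  have hl : HasDerivAt (fun s : ℝ => (c, s)) ((0 : ℝ), (1 : ℝ)) z :=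
    (hasDerivAt_const z c).prodMk (hasDerivAt_id z)
  exact (hg (c, z)).hasFDerivAt.comp_hasDerivAt z hl

lemma stmt9_integrableOn_texp :
    IntegrableOn (fun t : ℝ => t * Real.exp (-t)) (Ioi (0 : ℝ)) := by
  have h := Real.GammaIntegral_convergent (s := 2) (by norm_num)
  refine h.congr_fun (fun x hx => ?_) measurableSet_Ioi
  dsimp only; rw [show (2 : ℝ) - 1 = 1 by norm_num, Real.rpow_one, mul_comm]

variable [CompleteSpace A]

lemma stmt9_key (u u' u'' : ℝ → A) (C0 C1 C2 : ℝ)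
    (hu : ∀ t, HasDerivAt u (u' t) t) (hu' : ∀ t, HasDerivAt u' (u'' t) t)
    (hcont : Continuous u'')
    (hC0 : ∀ t, ‖u t‖ ≤ C0) (hC1 : ∀ t, ‖u' t‖ ≤ C1) (hC2 : ∀ t, ‖u'' t‖ ≤ C2) :
    ∫ t in Ioi (0 : ℝ), (t * Real.exp (-t)) • (u t - (2 : ℝ) • u' t + u'' t) = u 0 := by
  have hcu : Continuous u := by
    rw [continuous_iff_continuousAt]; exact fun t => (hu t).continuousAt
  have hcu' : Continuous u' := by
    rw [continuous_iff_continuousAt]; exact fun t => (hu' t).continuousAt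
  set G : ℝ → A := fun t => (t * Real.exp (-t)) • u' t - ((t + 1) * Real.exp (-t)) • u t
    with hGdef
  have hGcont : Continuous G := by fun_prop
  have hderiv : ∀ t ∈ Ioi (0 : ℝ), HasDerivAt G
      ((t * Real.exp (-t)) • (u t - (2 : ℝ) • u' t + u'' t)) t := by
    intro t _
    have hexp : HasDerivAt (fun s : ℝ => Real.exp (-s)) (-Real.exp (-t)) t := by
      simpa [Function.comp_def] using (Real.hasDerivAt_exp (-t)).comp t ((hasDerivAt_id t).neg)
    have he1 : HasDerivAt (fun s : ℝ => s * Real.exp (-s))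
        ((1 - t) * Real.exp (-t)) t := by
      have := (hasDerivAt_id t).mul hexp
      exact this.congr_deriv (by simp only [id_eq]; ring)
    have he2 : HasDerivAt (fun s : ℝ => (s + 1) * Real.exp (-s))
        ((-t) * Real.exp (-t)) t := by
      have := ((hasDerivAt_id t).add_const 1).mul hexp
      exact this.congr_deriv (by simp only [id_eq]; ring)
    have h1 := he1.smul (hu' t)
    have h2 := he2.smul (hu t)
    have h3 := h1.sub h2
    exact h3.congr_deriv (by module)
  have htend : Tendsto G atTop (𝓝 0) := by
    have hb1 : Tendsto (fun t : ℝ => t * Real.exp (-t)) atTop (𝓝 0) := by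
      simpa using Real.tendsto_pow_mul_exp_neg_atTop_nhds_zero 1
    have hb2 : Tendsto (fun t : ℝ => (t + 1) * Real.exp (-t)) atTop (𝓝 0) := by
      have := hb1.add Real.tendsto_exp_neg_atTop_nhds_zero
      simpa [add_mul] using this
    have hbound : ∀ᶠ t in atTop, ‖G t‖ ≤
        (t * Real.exp (-t)) * C1 + ((t + 1) * Real.exp (-t)) * C0 := by
      filter_upwards [eventually_ge_atTop (0 : ℝ)] with t ht
      have h1 : ‖(t * Real.exp (-t)) • u' t‖ ≤ (t * Real.exp (-t)) * C1 := by
        rw [norm_smul, Real.norm_eq_abs, abs_of_nonneg (by positivity)]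
        exact mul_le_mul_of_nonneg_left (hC1 t) (by positivity)
      have h2 : ‖((t + 1) * Real.exp (-t)) • u t‖ ≤ ((t + 1) * Real.exp (-t)) * C0 := by
        rw [norm_smul, Real.norm_eq_abs, abs_of_nonneg (by positivity)]
        exact mul_le_mul_of_nonneg_left (hC0 t) (by positivity)
      exact (norm_sub_le _ _).trans (add_le_add h1 h2)
    have hlim : Tendsto (fun t : ℝ => (t * Real.exp (-t)) * C1
        + ((t + 1) * Real.exp (-t)) * C0) atTop (𝓝 0) := by
      have := (hb1.mul_const C1).add (hb2.mul_const C0)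
      simpa using this
    exact squeeze_zero_norm' hbound hlim
  have hint : IntegrableOn
      (fun t => (t * Real.exp (-t)) • (u t - (2 : ℝ) • u' t + u'' t)) (Ioi (0 : ℝ)) := by
    refine Integrable.mono' ((stmt9_integrableOn_texp).mul_const (C0 + 2 * C1 + C2)) ?_ ?_
    · exact (Continuous.aestronglyMeasurable (by fun_prop)).restrict
    · filter_upwards [ae_restrict_mem measurableSet_Ioi] with t ht
      have ht' : (0 : ℝ) ≤ t * Real.exp (-t) := by
        have := le_of_lt (mem_Ioi.mp ht); positivity
      rw [norm_smul, Real.norm_eq_abs, abs_of_nonneg ht']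
      refine mul_le_mul_of_nonneg_left ?_ ht'
      calc ‖u t - (2 : ℝ) • u' t + u'' t‖
          ≤ ‖u t - (2 : ℝ) • u' t‖ + ‖u'' t‖ := norm_add_le _ _
        _ ≤ (‖u t‖ + ‖(2 : ℝ) • u' t‖) + ‖u'' t‖ := add_le_add_left (norm_sub_le _ _) _
        _ ≤ C0 + 2 * C1 + C2 := by
            rw [norm_smul]
            simp only [Real.norm_ofNat]
            exact add_le_add (add_le_add (hC0 t)
              (mul_le_mul_of_nonneg_left (hC1 t) (by norm_num))) (hC2 t)
  have hFTC := integral_Ioi_of_hasDerivAt_of_tendsto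
      hGcont.continuousWithinAt hderiv hint htend
  rw [hFTC, hGdef]
  simp

lemma stmt9_conv_eq (γ : ℝ → ℝ) (hγ : γ = fun t => if 0 ≤ t then t * Real.exp (-t) else 0)
    (w w' w'' : ℝ → A) (C0 C1 C2 : ℝ)
    (hw : ∀ s, HasDerivAt w (w' s) s) (hw' : ∀ s, HasDerivAt w' (w'' s) s)
    (hwc : Continuous w'')
    (hC0 : ∀ s, ‖w s‖ ≤ C0) (hC1 : ∀ s, ‖w' s‖ ≤ C1) (hC2 : ∀ s, ‖w'' s‖ ≤ C2)
    (x : ℝ) :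
    ∫ t : ℝ, γ t • (w (x - t) + (2 : ℝ) • w' (x - t) + w'' (x - t)) = w x := by
  have hneg : ∀ t : ℝ, HasDerivAt (fun s : ℝ => x - s) (-1 : ℝ) t := fun t => by
    simpa using (hasDerivAt_id' t).const_sub x
  set u : ℝ → A := fun t => w (x - t) with hu_def
  set u₁ : ℝ → A := fun t => -(w' (x - t)) with hu1_def
  set u₂ : ℝ → A := fun t => w'' (x - t) with hu2_def
  have hu : ∀ t, HasDerivAt u (u₁ t) t := by
    intro t
    have := (hw (x - t)).scomp t (hneg t)
    simpa [hu_def, hu1_def, Function.comp_def] using this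
  have hu1 : ∀ t, HasDerivAt u₁ (u₂ t) t := by
    intro t
    have := ((hw' (x - t)).scomp t (hneg t)).neg
    exact this.congr_deriv (by simp [hu2_def])
  have hcont2 : Continuous u₂ := hwc.comp (by fun_prop)
  have hB0 : ∀ t, ‖u t‖ ≤ C0 := fun t => hC0 _
  have hB1 : ∀ t, ‖u₁ t‖ ≤ C1 := fun t => by rw [hu1_def]; simpa using hC1 (x - t)
  have hB2 : ∀ t, ‖u₂ t‖ ≤ C2 := fun t => hC2 _
  have hγ0 : ∀ t : ℝ, t ∉ Ioi (0 : ℝ) → γ t = 0 := by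
    intro t ht
    simp only [mem_Ioi, not_lt] at ht
    rw [hγ]
    rcases ht.lt_or_eq with h | h
    · simp [not_le.mpr h]
    · simp [h]
  calc ∫ t : ℝ, γ t • (w (x - t) + (2 : ℝ) • w' (x - t) + w'' (x - t))
      = ∫ t in Ioi (0 : ℝ), γ t • (w (x - t) + (2 : ℝ) • w' (x - t) + w'' (x - t)) := by
        refine (setIntegral_eq_integral_of_forall_compl_eq_zero fun t ht => ?_).symm
        rw [hγ0 t ht, zero_smul]
    _ = ∫ t in Ioi (0 : ℝ), (t * Real.exp (-t)) • (u t - (2 : ℝ) • u₁ t + u₂ t) := by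
        refine setIntegral_congr_fun measurableSet_Ioi fun t ht => ?_
        have hγt : γ t = t * Real.exp (-t) := by
          rw [hγ]; simp [le_of_lt (mem_Ioi.mp ht)]
        rw [hγt]
        congr 1
        simp [hu_def, hu1_def, hu2_def, smul_neg, sub_neg_eq_add]
    _ = u 0 := stmt9_key u u₁ u₂ C0 C1 C2 hu hu1 hcont2 hB0 hB1 hB2
    _ = w x := by simp [hu_def]

end stmt9helpers
/-- Reconstruction of `f` from `b = (1+∂_y)²(1+∂_η)² f` via convolution with `γ ⊗ γ`. -/
theorem stmt9 {A : Type*} [NormedRing A] [StarRing A] [CStarRing A]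
    [NormedAlgebra ℂ A] [CompleteSpace A]
    (f : ℝ × ℝ → A) (hf : ContDiff ℝ (⊤ : ℕ∞) f)
    (hbd : ∀ k : ℕ, ∃ C : ℝ, ∀ p : ℝ × ℝ, ‖iteratedFDeriv ℝ k f p‖ ≤ C)
    (γ : ℝ → ℝ) (hγ : γ = fun t => if 0 ≤ t then t * Real.exp (-t) else 0)
    (Dy Dη : (ℝ × ℝ → A) → (ℝ × ℝ → A))
    (hDy : ∀ g p, Dy g p = fderiv ℝ g p (1, 0))
    (hDη : ∀ g p, Dη g p = fderiv ℝ g p (0, 1))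
    (b : ℝ × ℝ → A)
    (hb : b = (fun g => g + Dy g) ((fun g => g + Dy g)
        ((fun g => g + Dη g) ((fun g => g + Dη g) f)))) :
    ∀ x ξ : ℝ, f (x, ξ) = ∫ p : ℝ × ℝ, (γ p.1 * γ p.2) • b (x - p.1, ξ - p.2) := by
  intro x ξ
  have hv10 : ‖((1 : ℝ), (0 : ℝ))‖ ≤ 1 := by
    rw [Prod.norm_def]; simp
  have hv01 : ‖((0 : ℝ), (1 : ℝ))‖ ≤ 1 := by
    rw [Prod.norm_def]; simp
  have hDy' : ∀ g : ℝ × ℝ → A, Dy g = stmt9dd (1, 0) g := fun g => funext fun p => hDy g p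
  have hDη' : ∀ g : ℝ × ℝ → A, Dη g = stmt9dd (0, 1) g := fun g => funext fun p => hDη g p
  simp only [hDy', hDη'] at hb
  set F2 : ℝ × ℝ → A :=
      (f + stmt9dd (0, 1) f) + stmt9dd (0, 1) (f + stmt9dd (0, 1) f) with hF2
  have hbdef : b = (F2 + stmt9dd (1, 0) F2) + stmt9dd (1, 0) (F2 + stmt9dd (1, 0) F2) := hb
  -- Good properties
  have Gf : stmt9Good f := ⟨hf, hbd⟩
  have GF1 : stmt9Good (f + stmt9dd (0, 1) f) := Gf.add (Gf.dd hv01)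
  have GF2 : stmt9Good F2 := GF1.add (GF1.dd hv01)
  have GF3 : stmt9Good (F2 + stmt9dd (1, 0) F2) := GF2.add (GF2.dd hv10)
  have Gb : stmt9Good b := hbdef ▸ GF3.add (GF3.dd hv10)
  -- differentiability
  have hdf : Differentiable ℝ f := Gf.1.differentiable (by simp)
  have hddf : Differentiable ℝ (stmt9dd (0, 1) f) := (Gf.dd hv01).1.differentiable (by simp)
  have hdF2 : Differentiable ℝ F2 := GF2.1.differentiable (by simp)
  have hddF2 : Differentiable ℝ (stmt9dd (1, 0) F2) := (GF2.dd hv10).1.differentiable (by simp)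
  -- pointwise expansions
  have hbp : ∀ p, b p = F2 p + (2 : ℝ) • stmt9dd (1, 0) F2 p
      + stmt9dd (1, 0) (stmt9dd (1, 0) F2) p := by
    intro p
    rw [hbdef]
    have hsplit : stmt9dd (1, 0) (F2 + stmt9dd (1, 0) F2) p
        = stmt9dd (1, 0) F2 p + stmt9dd (1, 0) (stmt9dd (1, 0) F2) p := by
      show fderiv ℝ (fun q => F2 q + stmt9dd (1, 0) F2 q) p (1, 0) = _
      rw [fderiv_fun_add (hdF2 p) (hddF2 p)]
      rfl
    simp only [Pi.add_apply, hsplit]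
    module
  have hF2p : ∀ p, F2 p = f p + (2 : ℝ) • stmt9dd (0, 1) f p
      + stmt9dd (0, 1) (stmt9dd (0, 1) f) p := by
    intro p
    rw [hF2]
    have hsplit : stmt9dd (0, 1) (f + stmt9dd (0, 1) f) p
        = stmt9dd (0, 1) f p + stmt9dd (0, 1) (stmt9dd (0, 1) f) p := by
      show fderiv ℝ (fun q => f q + stmt9dd (0, 1) f q) p (0, 1) = _
      rw [fderiv_fun_add (hdf p) (hddf p)]
      rfl
    simp only [Pi.add_apply, hsplit]
    module
  -- bounds
  obtain ⟨C20, hC20⟩ := GF2.bound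
  obtain ⟨C21, hC21⟩ := (GF2.dd hv10).bound
  obtain ⟨C22, hC22⟩ := ((GF2.dd hv10).dd hv10).bound
  obtain ⟨C00, hC00⟩ := Gf.bound
  obtain ⟨C01, hC01⟩ := (Gf.dd hv01).bound
  obtain ⟨C02, hC02⟩ := ((Gf.dd hv01).dd hv01).bound
  have hbB : ∀ p, ‖b p‖ ≤ C20 + 2 * C21 + C22 := by
    intro p
    rw [hbp p]
    calc ‖F2 p + (2 : ℝ) • stmt9dd (1, 0) F2 p + stmt9dd (1, 0) (stmt9dd (1, 0) F2) p‖
        ≤ ‖F2 p + (2 : ℝ) • stmt9dd (1, 0) F2 p‖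
          + ‖stmt9dd (1, 0) (stmt9dd (1, 0) F2) p‖ := norm_add_le _ _
      _ ≤ (‖F2 p‖ + ‖(2 : ℝ) • stmt9dd (1, 0) F2 p‖)
          + ‖stmt9dd (1, 0) (stmt9dd (1, 0) F2) p‖ := add_le_add_left (norm_add_le _ _) _
      _ ≤ C20 + 2 * C21 + C22 := by
          rw [norm_smul]
          simp only [Real.norm_ofNat]
          exact add_le_add (add_le_add (hC20 p)
            (mul_le_mul_of_nonneg_left (hC21 p) (by norm_num))) (hC22 p)
  -- γ facts
  have hγcont : Continuous γ := by
    rw [hγ]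
    exact Continuous.if_le (by fun_prop) continuous_const continuous_const
      continuous_id (fun t ht => by simp [← ht])
  have hγnn : ∀ t, 0 ≤ γ t := by
    intro t
    rw [hγ]
    dsimp only
    split_ifs with h
    · exact mul_nonneg h (le_of_lt (Real.exp_pos _))
    · exact le_refl _
  have hγint : Integrable γ := by
    have hind : γ = Set.indicator (Ici (0 : ℝ)) (fun t => t * Real.exp (-t)) := by
      funext t
      rw [hγ, Set.indicator_apply]
      simp [mem_Ici]
    rw [hind, integrable_indicator_iff measurableSet_Ici,
      integrableOn_Ici_iff_integrableOn_Ioi]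
    exact stmt9_integrableOn_texp
  have hγγ : Integrable (fun p : ℝ × ℝ => γ p.1 * γ p.2) (volume.prod volume) :=
    hγint.mul_prod hγint
  have hbcont : Continuous b := Gb.1.continuous
  have hFint : Integrable (fun p : ℝ × ℝ => (γ p.1 * γ p.2) • b (x - p.1, ξ - p.2))
      (volume.prod volume) := by
    refine Integrable.mono' (hγγ.mul_const (C20 + 2 * C21 + C22)) ?_ ?_
    · exact Continuous.aestronglyMeasurable (by fun_prop)
    · refine Filter.Eventually.of_forall fun p => ?_
      rw [norm_smul, Real.norm_eq_abs, abs_of_nonneg (mul_nonneg (hγnn _) (hγnn _))]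
      exact mul_le_mul_of_nonneg_left (hbB _) (mul_nonneg (hγnn _) (hγnn _))
  -- the two 1D convolution identities
  have hcont22 : Continuous (stmt9dd (1, 0) (stmt9dd (1, 0) F2)) :=
    ((GF2.dd hv10).dd hv10).1.continuous
  have hcont02 : Continuous (stmt9dd (0, 1) (stmt9dd (0, 1) f)) :=
    ((Gf.dd hv01).dd hv01).1.continuous
  have inner : ∀ c : ℝ, ∫ t : ℝ, γ t • b (x - t, c) = F2 (x, c) := by
    intro c
    have h := stmt9_conv_eq γ hγ (fun s => F2 (s, c)) (fun s => stmt9dd (1, 0) F2 (s, c))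
        (fun s => stmt9dd (1, 0) (stmt9dd (1, 0) F2) (s, c)) C20 C21 C22
        (fun s => stmt9_slice_fst hdF2 c s) (fun s => stmt9_slice_fst hddF2 c s)
        (hcont22.comp (by fun_prop))
        (fun s => hC20 _) (fun s => hC21 _) (fun s => hC22 _) x
    rw [← h]
    congr 1
    funext t
    rw [hbp]
  have outer : ∫ t : ℝ, γ t • F2 (x, ξ - t) = f (x, ξ) := by
    have h := stmt9_conv_eq γ hγ (fun s => f (x, s)) (fun s => stmt9dd (0, 1) f (x, s))
        (fun s => stmt9dd (0, 1) (stmt9dd (0, 1) f) (x, s)) C00 C01 C02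
        (fun s => stmt9_slice_snd hdf x s) (fun s => stmt9_slice_snd hddf x s)
        (hcont02.comp (by fun_prop))
        (fun s => hC00 _) (fun s => hC01 _) (fun s => hC02 _) ξ
    rw [← h]
    congr 1
    funext t
    rw [hF2p]
  -- assemble with Fubini
  rw [show (volume : Measure (ℝ × ℝ)) = volume.prod volume from Measure.volume_eq_prod ℝ ℝ]
  rw [integral_prod_symm _ hFint]
  have hstep : ∀ η, ∫ y, (γ y * γ η) • b (x - y, ξ - η) = γ η • F2 (x, ξ - η) := by
    intro η
    have hcomm : (fun y => (γ y * γ η) • b (x - y, ξ - η))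
        = fun y => γ η • (γ y • b (x - y, ξ - η)) := by
      funext y
      rw [mul_comm, mul_smul]
    rw [hcomm, integral_smul, inner]
  simp_rw [hstep]
  exact outer.symm
end

section
/- Let f : ℝ^n → ℂ be continuous with sup_x |x|^l |f(x)| < ∞ for every nonnegative integer l, and let J be an antisymmetric n×n real matrix. Then for every nonnegative integer l and every ε > 0 there exists δ > 0 such that |x|^l · |f(x + Jξ) e^{i x·ξ} − f(x)| < ε for all x, ξ ∈ ℝ^n with |ξ| < δ. -/
open scoped BigOperators

set_option maxHeartbeats 1600000
set_option synthInstance.maxHeartbeats 400000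

private lemma sqN_eq {n : ℕ} (x : Fin n → ℝ) :
    Real.sqrt (∑ j, x j ^ 2) = ‖(WithLp.equiv 2 (Fin n → ℝ)).symm x‖ := by
  rw [EuclideanSpace.norm_eq]; simp [Real.norm_eq_abs, sq_abs]

private noncomputable def LLaux {n : ℕ} (J : Matrix (Fin n) (Fin n) ℝ) :
    EuclideanSpace ℝ (Fin n) →ₗ[ℝ] EuclideanSpace ℝ (Fin n) where
  toFun ξ := (WithLp.equiv 2 (Fin n → ℝ)).symm (J.mulVec ((WithLp.equiv 2 (Fin n → ℝ)) ξ))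
  map_add' a b := by simp [Matrix.mulVec_add]
  map_smul' c a := by simp [Matrix.mulVec_smul]

private lemma mulVec_bound {n : ℕ} (J : Matrix (Fin n) (Fin n) ℝ) :
    ∃ K : ℝ, 0 ≤ K ∧ ∀ ξ : Fin n → ℝ,
      ‖(WithLp.equiv 2 (Fin n → ℝ)).symm (J.mulVec ξ)‖ ≤ K * ‖(WithLp.equiv 2 (Fin n → ℝ)).symm ξ‖ := by
  refine ⟨‖(LLaux J).toContinuousLinearMap‖, norm_nonneg _, fun ξ => ?_⟩
  simpa [LLaux] using (LLaux J).toContinuousLinearMap.le_opNorm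
    ((WithLp.equiv 2 (Fin n → ℝ)).symm ξ)

private lemma cs_bound {n : ℕ} (x ξ : Fin n → ℝ) :
    |∑ j, x j * ξ j| ≤ ‖(WithLp.equiv 2 (Fin n → ℝ)).symm x‖ *
      ‖(WithLp.equiv 2 (Fin n → ℝ)).symm ξ‖ := by
  have h := abs_real_inner_le_norm ((WithLp.equiv 2 (Fin n → ℝ)).symm x)
    ((WithLp.equiv 2 (Fin n → ℝ)).symm ξ)
  have he : (inner ℝ ((WithLp.equiv 2 (Fin n → ℝ)).symm x)
      ((WithLp.equiv 2 (Fin n → ℝ)).symm ξ) : ℝ) = ∑ j, x j * ξ j := by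
    simp [PiLp.inner_apply, RCLike.inner_apply, mul_comm]
  rwa [he] at h

/-- Uniform smallness of `|x|^l |f(x+Jξ)e^{ixξ} - f(x)|` for small `ξ`, for `f` continuous
and rapidly decreasing and `J` antisymmetric. -/
theorem stmt12 {n : ℕ} (f : (Fin n → ℝ) → ℂ) (hf : Continuous f)
    (hdec : ∀ l : ℕ, ∃ C : ℝ, ∀ x : Fin n → ℝ,
      (Real.sqrt (∑ j, x j ^ 2)) ^ l * ‖f x‖ ≤ C)
    (J : Matrix (Fin n) (Fin n) ℝ) (hJ : J.transpose = -J) :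
    ∀ l : ℕ, ∀ ε > (0 : ℝ), ∃ δ > (0 : ℝ), ∀ x ξ : Fin n → ℝ,
      Real.sqrt (∑ j, ξ j ^ 2) < δ →
      (Real.sqrt (∑ j, x j ^ 2)) ^ l *
        ‖f (x + J.mulVec ξ) * Complex.exp (Complex.I * ((∑ j, x j * ξ j : ℝ) : ℂ)) - f x‖
        < ε := by
  intro l ε hε
  obtain ⟨K, hK0, hK⟩ := mulVec_bound J
  obtain ⟨C0, hC0⟩ := hdec 0
  obtain ⟨C1, hC1⟩ := hdec (l + 1)
  have hfC0 : ∀ x, ‖f x‖ ≤ C0 := fun x => by simpa using hC0 x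
  have hC0nn : 0 ≤ C0 := le_trans (norm_nonneg _) (hfC0 0)
  have hC1' : ∀ x : Fin n → ℝ,
      ‖(WithLp.equiv 2 (Fin n → ℝ)).symm x‖ ^ (l + 1) * ‖f x‖ ≤ C1 := fun x => by
    rw [← sqN_eq]; exact hC1 x
  have hC1nn : 0 ≤ C1 := le_trans (by positivity) (hC1' 0)
  set M : ℝ := 2 ^ (l + 1) * C1 + C1 with hM
  have hMnn : 0 ≤ M := by positivity
  set R : ℝ := max (max 1 (2 * (K + 1))) (M / ε + 1) with hRdef
  have hR1 : 1 ≤ R := le_trans (le_max_left _ _) (le_max_left _ _)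
  have hR0 : 0 < R := lt_of_lt_of_le one_pos hR1
  have hRK : 2 * (K + 1) ≤ R := le_trans (le_max_right _ _) (le_max_left _ _)
  have hRM : M / ε + 1 ≤ R := le_max_right _ _
  set B : ℝ := R ^ l with hBdef
  have hB1 : 1 ≤ B := one_le_pow₀ hR1
  have hB0 : 0 < B := lt_of_lt_of_le one_pos hB1
  have hε2 : 0 < ε / (2 * (B + 1)) := by positivity
  have hg : Continuous fun a : EuclideanSpace ℝ (Fin n) => f ((WithLp.equiv 2 (Fin n → ℝ)) a) :=
    hf.comp (PiLp.continuous_ofLp (p := 2) (β := fun _ : Fin n => ℝ))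
  obtain ⟨δ₁, hδ₁0, hUC⟩ := Metric.uniformContinuousOn_iff.mp
    ((isCompact_closedBall (0 : EuclideanSpace ℝ (Fin n))
      (R + K + 1)).uniformContinuousOn_of_continuous hg.continuousOn)
    (ε / (2 * (B + 1))) hε2
  set δ : ℝ := min (min 1 (δ₁ / (K + 1))) (min (ε / (2 * (2 * C0 * R * B + 1))) (1 / R))
    with hδdef
  have hδ0 : 0 < δ := by
    apply lt_min (lt_min one_pos (by positivity)) (lt_min (by positivity) (by positivity))
  have hδ1 : δ ≤ 1 := le_trans (min_le_left _ _) (min_le_left _ _)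
  have hδd1 : δ ≤ δ₁ / (K + 1) := le_trans (min_le_left _ _) (min_le_right _ _)
  have hδe : δ ≤ ε / (2 * (2 * C0 * R * B + 1)) := le_trans (min_le_right _ _) (min_le_left _ _)
  have hδR : δ ≤ 1 / R := le_trans (min_le_right _ _) (min_le_right _ _)
  refine ⟨δ, hδ0, ?_⟩
  intro x ξ hξ
  rw [sqN_eq] at hξ
  rw [sqN_eq]
  set a := (WithLp.equiv 2 (Fin n → ℝ)).symm x with ha
  set c := (WithLp.equiv 2 (Fin n → ℝ)).symm ξ with hc
  set b := (WithLp.equiv 2 (Fin n → ℝ)).symm (J.mulVec ξ) with hb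
  set y := x + J.mulVec ξ with hy
  set d : ℝ := ∑ j, x j * ξ j with hd
  set e : ℂ := Complex.exp (Complex.I * (d : ℂ)) with he
  have hbc : ‖b‖ ≤ K * ‖c‖ := hK ξ
  have hbK : ‖b‖ ≤ K := by nlinarith [norm_nonneg c]
  have he1 : ‖e‖ = 1 := by
    rw [he]; simp [Complex.norm_exp]
  have hΦy : (WithLp.equiv 2 (Fin n → ℝ)).symm y = a + b := rfl
  have hcδ : ‖c‖ < δ := hξ
  by_cases hcase : ‖a‖ ≤ R
  · -- inner region
    have hdle : |d| ≤ R * ‖c‖ :=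
      (cs_bound x ξ).trans (mul_le_mul_of_nonneg_right hcase (norm_nonneg _))
    have hRinv : R * (1 / R) = 1 := by field_simp
    have hd1 : |d| ≤ 1 := by
      have : ‖c‖ ≤ 1 / R := le_of_lt (lt_of_lt_of_le hcδ hδR)
      nlinarith
    have hedist : ‖e - 1‖ ≤ 2 * |d| := by
      have habs : ‖(Complex.I * (d : ℂ))‖ = |d| := by
        simp [map_mul]
      have := Complex.norm_exp_sub_one_le (x := Complex.I * (d : ℂ)) (by rw [habs]; exact hd1)
      rw [habs] at this
      simpa [he] using this
    have hfy_fx : ‖f y - f x‖ < ε / (2 * (B + 1)) := by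
      have hmem1 : (WithLp.equiv 2 (Fin n → ℝ)).symm y ∈
          Metric.closedBall (0 : EuclideanSpace ℝ (Fin n)) (R + K + 1) := by
        rw [Metric.mem_closedBall, dist_zero_right, hΦy]
        have := norm_add_le a b
        linarith
      have hmem2 : a ∈ Metric.closedBall (0 : EuclideanSpace ℝ (Fin n)) (R + K + 1) := by
        rw [Metric.mem_closedBall, dist_zero_right]
        linarith
      have hdist : dist ((WithLp.equiv 2 (Fin n → ℝ)).symm y) a < δ₁ := by
        rw [hΦy, dist_eq_norm, add_sub_cancel_left]
        have hu0 : 0 < δ₁ / (K + 1) := by positivity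
        have hu : δ₁ / (K + 1) * (K + 1) = δ₁ := div_mul_cancel₀ _ (by positivity)
        nlinarith [norm_nonneg c, norm_nonneg b]
      have := hUC _ hmem1 a hmem2 hdist
      rw [dist_eq_norm] at this
      simpa [ha] using this
    have hS : ‖f y * e - f x‖ < 2 * C0 * (R * δ) + ε / (2 * (B + 1)) := by
      have h1 : f y * e - f x = f y * (e - 1) + (f y - f x) := by ring
      rw [h1]
      have h2 : ‖f y * (e - 1)‖ ≤ C0 * (2 * |d|) := by
        rw [norm_mul]
        exact mul_le_mul (hfC0 y) hedist (norm_nonneg _) hC0nn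
      have h3 : C0 * (2 * |d|) ≤ 2 * C0 * (R * δ) := by
        have hcd : ‖c‖ ≤ δ := le_of_lt hcδ
        have ha1 : C0 * |d| ≤ C0 * (R * ‖c‖) := mul_le_mul_of_nonneg_left hdle hC0nn
        have ha2 : C0 * R * ‖c‖ ≤ C0 * R * δ :=
          mul_le_mul_of_nonneg_left hcd (by positivity)
        nlinarith
      calc ‖f y * (e - 1) + (f y - f x)‖ ≤ ‖f y * (e - 1)‖ + ‖f y - f x‖ := norm_add_le _ _
        _ < 2 * C0 * (R * δ) + ε / (2 * (B + 1)) := by linarith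
    have hpowB : ‖a‖ ^ l ≤ B := pow_le_pow_left₀ (norm_nonneg a) hcase l
    have hq : (0 : ℝ) ≤ 2 * C0 * R * B := by positivity
    have hu : ε / (2 * (2 * C0 * R * B + 1)) * (2 * (2 * C0 * R * B + 1)) = ε :=
      div_mul_cancel₀ _ (by positivity)
    have hu0 : 0 < ε / (2 * (2 * C0 * R * B + 1)) := by positivity
    have key1 : 2 * C0 * R * B * δ < ε / 2 := by
      nlinarith [mul_le_mul_of_nonneg_left hδe hq]
    have hv : ε / (2 * (B + 1)) * (2 * (B + 1)) = ε := div_mul_cancel₀ _ (by positivity)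
    have key2 : B * (ε / (2 * (B + 1))) < ε / 2 := by nlinarith
    calc ‖a‖ ^ l * ‖f y * e - f x‖ ≤ B * ‖f y * e - f x‖ :=
          mul_le_mul_of_nonneg_right hpowB (norm_nonneg _)
      _ < B * (2 * C0 * (R * δ) + ε / (2 * (B + 1))) := by
          exact mul_lt_mul_of_pos_left hS hB0
      _ = 2 * C0 * R * B * δ + B * (ε / (2 * (B + 1))) := by ring
      _ < ε := by linarith
  · -- outer region
    push_neg at hcase
    have ha2K : 2 * (K + 1) ≤ ‖a‖ := le_of_lt (lt_of_le_of_lt hRK hcase)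
    have hab : ‖a‖ ≤ ‖a + b‖ + ‖b‖ := by
      have h0 : a = (a + b) - b := by abel
      calc ‖a‖ = ‖(a + b) - b‖ := by rw [← h0]
        _ ≤ ‖a + b‖ + ‖b‖ := norm_sub_le _ _
    have h2ab : ‖a‖ ≤ 2 * ‖a + b‖ := by linarith
    have hpow : ‖a‖ ^ (l + 1) ≤ 2 ^ (l + 1) * ‖a + b‖ ^ (l + 1) := by
      calc ‖a‖ ^ (l + 1) ≤ (2 * ‖a + b‖) ^ (l + 1) :=
            pow_le_pow_left₀ (norm_nonneg a) h2ab _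
        _ = 2 ^ (l + 1) * ‖a + b‖ ^ (l + 1) := by rw [mul_pow]
    have hSb : ‖f y * e - f x‖ ≤ ‖f y‖ + ‖f x‖ := by
      calc ‖f y * e - f x‖ ≤ ‖f y * e‖ + ‖f x‖ := norm_sub_le _ _
        _ = ‖f y‖ + ‖f x‖ := by rw [norm_mul, he1, mul_one]
    have hC1y : ‖a + b‖ ^ (l + 1) * ‖f y‖ ≤ C1 := by
      have := hC1' y
      rwa [hΦy] at this
    have hC1x : ‖a‖ ^ (l + 1) * ‖f x‖ ≤ C1 := hC1' x
    have hmain : ‖a‖ ^ l * ‖f y * e - f x‖ * ‖a‖ ≤ M := by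
      have e1 : ‖a‖ ^ l * ‖f y * e - f x‖ * ‖a‖ = ‖a‖ ^ (l + 1) * ‖f y * e - f x‖ := by ring
      rw [e1]
      have h4 : ‖a‖ ^ (l + 1) * ‖f y * e - f x‖ ≤ ‖a‖ ^ (l + 1) * (‖f y‖ + ‖f x‖) :=
        mul_le_mul_of_nonneg_left hSb (by positivity)
      have h5 : ‖a‖ ^ (l + 1) * ‖f y‖ ≤ 2 ^ (l + 1) * (‖a + b‖ ^ (l + 1) * ‖f y‖) := by
        have := mul_le_mul_of_nonneg_right hpow (norm_nonneg (f y))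
        linarith [this]
      have h6 : 2 ^ (l + 1) * (‖a + b‖ ^ (l + 1) * ‖f y‖) ≤ 2 ^ (l + 1) * C1 :=
        mul_le_mul_of_nonneg_left hC1y (by positivity)
      have := mul_add (‖a‖ ^ (l + 1)) (‖f y‖) (‖f x‖)
      rw [hM]
      nlinarith
    have hA0 : 0 < ‖a‖ := lt_trans hR0 hcase
    have h1 : ‖a‖ ^ l * ‖f y * e - f x‖ ≤ M / ‖a‖ := (le_div_iff₀ hA0).mpr hmain
    have h2 : M / ‖a‖ ≤ M / R := by
      apply div_le_div_of_nonneg_left hMnn hR0 (le_of_lt hcase)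
    have h3 : M / R < ε := by
      rw [div_lt_iff₀ hR0]
      have hMε : M / ε * ε = M := div_mul_cancel₀ _ (ne_of_gt hε)
      nlinarith
    linarith
end

section
/- Let A be a separable C*-algebra. Then L²(ℝ^n, A) embeds continuously and injectively into the Hilbert-module completion of the A-valued Schwartz space: the identity on S^A(ℝ^n) extends to an injective bounded linear map I : L²(ℝ^n,A) → closure of S^A(ℝ^n) under the norm ‖f‖₂ = ‖∫ f(x)*f(x) dx‖^{1/2}, with ‖I(f)‖₂ ≤ ‖f‖_{L²}. -/
open scoped ENNReal


open MeasureTheory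

/-- Integral of an integrable function with values in a closed convex cone lies in the cone. -/
lemma integral_mem_closed_cone {E : Type*} [NormedAddCommGroup E] [NormedSpace ℝ E]
    [CompleteSpace E] {s : Set E} (hs : IsClosed s) (hconv : Convex ℝ s) (h0 : (0 : E) ∈ s)
    (hcone : ∀ c : ℝ, 0 ≤ c → ∀ a ∈ s, c • a ∈ s)
    {α : Type*} [MeasurableSpace α] {μ : Measure α} {g : α → E}
    (hg : Integrable g μ) (hmem : ∀ x, g x ∈ s) : (∫ x, g x ∂μ) ∈ s := by
  by_contra h
  obtain ⟨φ, u, hφs, hφu⟩ := geometric_hahn_banach_closed_point hconv hs h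
  have hu0 : 0 < u := by simpa using hφs 0 h0
  have hφa : ∀ a ∈ s, φ a ≤ 0 := by
    intro a ha
    by_contra hpos
    push_neg at hpos
    have h1 := hφs (((u + 1) / φ a) • a) (hcone _ (by positivity) a ha)
    rw [φ.map_smul, smul_eq_mul, div_mul_cancel₀ _ hpos.ne'] at h1
    linarith
  have hle : φ (∫ x, g x ∂μ) ≤ 0 := by
    rw [← ContinuousLinearMap.integral_comp_comm φ hg]
    exact integral_nonpos fun x => hφa _ (hmem x)
  linarith

/-- Scaling a nonnegative element of a star-ordered ring by a nonnegative real is nonnegative. -/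
lemma real_smul_nonneg {A : Type*} [NonUnitalRing A] [StarRing A] [PartialOrder A]
    [StarOrderedRing A] [Module ℝ A] [StarModule ℝ A] [IsScalarTower ℝ A A]
    [SMulCommClass ℝ A A] {c : ℝ} (hc : 0 ≤ c) {a : A} (ha : 0 ≤ a) : 0 ≤ c • a := by
  rw [StarOrderedRing.nonneg_iff] at ha ⊢
  refine AddSubmonoid.closure_induction ?mem ?zero ?add ha
  case mem =>
    rintro x ⟨y, rfl⟩
    apply AddSubmonoid.subset_closure
    refine ⟨Real.sqrt c • y, ?_⟩
    show star (Real.sqrt c • y) * (Real.sqrt c • y) = c • (star y * y)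
    rw [star_smul, star_trivial, smul_mul_smul_comm, Real.mul_self_sqrt hc]
  case zero => simpa only [smul_zero] using zero_mem _
  case add => exact fun x y _ _ ↦ by simpa only [smul_add] using add_mem

/-- The identity on `A`-valued Schwartz functions extends to an injective bounded map of
`L²(ℝⁿ,A)` into the Hilbert-module completion: the Hilbert-module norm
`‖f‖₂ = ‖∫ f(x)* f(x) dx‖^{1/2}` is dominated by the `L²` norm, and it vanishes only for
`f = 0` a.e. -/
theorem stmt18 {n : ℕ} {A : Type*} [NormedRing A] [StarRing A] [CStarRing A]
    [NormedAlgebra ℂ A] [StarModule ℂ A] [CompleteSpace A]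
    [TopologicalSpace.SeparableSpace A] :
    ∀ f : (Fin n → ℝ) → A, MemLp f 2 volume →
      Real.sqrt ‖∫ x, star (f x) * f x‖ ≤ (eLpNorm f 2 volume).toReal ∧
      ((∫ x, star (f x) * f x) = 0 → ∀ᵐ x ∂(volume : Measure (Fin n → ℝ)), f x = 0) := by
  letI : CStarAlgebra A := {}
  letI : PartialOrder A := CStarAlgebra.spectralOrder A
  letI : StarOrderedRing A := CStarAlgebra.spectralOrderedRing A
  intro f hf
  set μ : Measure (Fin n → ℝ) := volume
  set g : (Fin n → ℝ) → A := fun x => star (f x) * f x with hg_def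
  -- the norm of g is the square of the norm of f
  have hng : ∀ x, ‖g x‖ = ‖f x‖ ^ (2 : ℝ) := fun x => by
    show ‖star (f x) * f x‖ = _
    rw [CStarRing.norm_star_mul_self, Real.rpow_two, sq]
  -- integrability of g
  have hnorm_int : Integrable (fun x => ‖f x‖ ^ (2 : ℝ)) μ := by
    simpa using hf.integrable_norm_rpow two_ne_zero ENNReal.ofNat_ne_top
  have hg_meas : AEStronglyMeasurable g μ :=
    (continuous_star.comp_aestronglyMeasurable hf.aestronglyMeasurable).mul hf.aestronglyMeasurable
  have hg_int : Integrable g μ := by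
    refine hnorm_int.mono' hg_meas (Filter.Eventually.of_forall fun x => (hng x).le)
  -- the positive cone
  set P : Set A := {a : A | 0 ≤ a} with hP_def
  have hP_closed : IsClosed P := by
    rw [hP_def]
    exact CStarAlgebra.isClosed_nonneg
  have hcone_smul : ∀ c : ℝ, 0 ≤ c → ∀ a ∈ P, c • a ∈ P :=
    fun c hc a ha => show 0 ≤ c • a from real_smul_nonneg hc ha
  have hconv : Convex ℝ P := by
    intro x hx y hy p q hp hq _
    exact show (0 : A) ≤ p • x + q • y from add_nonneg (real_smul_nonneg hp hx) (real_smul_nonneg hq hy)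
  have h0mem : (0 : A) ∈ P := le_refl (0 : A)
  have hmem : ∀ x, g x ∈ P := fun x => star_mul_self_nonneg (f x)
  constructor
  · -- norm estimate
    have h1 : ‖∫ x, g x ∂μ‖ ≤ ∫ x, ‖f x‖ ^ (2 : ℝ) ∂μ := by
      calc ‖∫ x, g x ∂μ‖ ≤ ∫ x, ‖g x‖ ∂μ := norm_integral_le_integral_norm g
        _ = ∫ x, ‖f x‖ ^ (2 : ℝ) ∂μ := integral_congr_ae (.of_forall fun x => hng x)
    have h2 : (eLpNorm f 2 μ).toReal = (∫ x, ‖f x‖ ^ (2 : ℝ) ∂μ) ^ ((2 : ℝ)⁻¹) := by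
      rw [hf.eLpNorm_eq_integral_rpow_norm two_ne_zero ENNReal.ofNat_ne_top]
      rw [ENNReal.toReal_ofReal (by positivity)]
      norm_num
    have hI : 0 ≤ ∫ x, ‖f x‖ ^ (2 : ℝ) ∂μ :=
      integral_nonneg fun x => by positivity
    rw [h2, show ((2:ℝ)⁻¹) = 1/2 by norm_num, ← Real.sqrt_eq_rpow]
    exact Real.sqrt_le_sqrt h1
  · -- injectivity
    intro hzero
    have hset : ∀ s : Set (Fin n → ℝ), MeasurableSet s → μ s < ∞ → ∫ x in s, g x ∂μ = 0 := by
      intro s hs _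
      have h₁ : 0 ≤ ∫ x in s, g x ∂μ :=
        integral_mem_closed_cone hP_closed hconv h0mem hcone_smul
          hg_int.restrict hmem
      have h₂ : 0 ≤ ∫ x in sᶜ, g x ∂μ :=
        integral_mem_closed_cone hP_closed hconv h0mem hcone_smul
          hg_int.restrict hmem
      have hadd : (∫ x in s, g x ∂μ) + ∫ x in sᶜ, g x ∂μ = 0 := by
        rw [integral_add_compl hs hg_int]
        exact hzero
      refine le_antisymm ?_ h₁
      have : (∫ x in s, g x ∂μ) = -(∫ x in sᶜ, g x ∂μ) := by
        rw [eq_neg_iff_add_eq_zero]; exact hadd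
      rw [this]
      have := add_le_add_left h₂ (-(∫ x in sᶜ, g x ∂μ))
      simpa using this
    have hgz : g =ᵐ[μ] 0 := hg_int.ae_eq_zero_of_forall_setIntegral_eq_zero hset
    filter_upwards [hgz] with x hx
    have : ‖f x‖ * ‖f x‖ = 0 := by
      rw [← CStarRing.norm_star_mul_self]
      simp [hg_def] at hx
      simp [hx]
    rcases mul_self_eq_zero.mp this with h
    exact norm_eq_zero.mp h
end
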